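/- Fix λ > 0 and define λ₁ := 1/(1 + 1/(λ + 1)) and λ_n := 1/(1 + 1/(λ + λ_{n−1})) for n > 1. Let G₀, G₁, …, G_n and R₁, …, R_n be relations on the real Hilbert space H = L²([0,∞); ℝ), where every G_k is 1-input strictly incrementally positive and every R_k has incremental secant gain λ. Define Z₀ := (G₀)⁻¹ and Z_k := (G_k + (R_k + Z_{k−1})⁻¹)⁻¹ for k = 1, …, n. Then Z_n has incremental secant gain λ_n, i.e. λ_n⟪i₁−i₂, v₁−v₂⟫ ≥ ‖v₁−v₂‖² for all (i₁,v₁),(i₂,v₂) ∈ Z_n. -/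

import Mathlib

/-!
Each operation in the recursion `Z_k = (G_k + (R_k + Z_{k-1})⁻¹)⁻¹` transforms the constants
explicitly: inverting a relation exchanges a secant gain `γ` with input strict positivity `1/γ`,
input strict positivity constants add under `+`, and secant gains add under `+` (by the triangle
inequality and the two-term Cauchy–Schwarz bound `(x + y)² ≤ (γ + δ)(x²/γ + y²/δ)`). Starting from
`Z₀ = G₀⁻¹` with gain `1` and following the chain, the gain of `Z_k` obeys exactly the recursion
defining `λ_k`.
-/

open MeasureTheory RealInnerProductSpace

noncomputable section

/-- The real Hilbert space `H = L²([0,∞); ℝ)`. -/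
abbrev H : Type := Lp ℝ 2 (volume.restrict (Set.Ici (0:ℝ)))

/-- The sum of two relations: `A + B = {(x, y + z) : (x, y) ∈ A, (x, z) ∈ B}`. -/
def relAdd (A B : Set (H × H)) : Set (H × H) :=
  {p | ∃ y z : H, (p.1, y) ∈ A ∧ (p.1, z) ∈ B ∧ p.2 = y + z}

/-- The relational inverse `A⁻¹ = {(y, u) : (u, y) ∈ A}`. -/
def relInv (A : Set (H × H)) : Set (H × H) := {p | (p.2, p.1) ∈ A}

/-- `A` is `μ`-input strictly incrementally positive (`μ`-coercive). -/
def InputStrictlyPositive (A : Set (H × H)) (μ : ℝ) : Prop :=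
  ∀ u₁ y₁ u₂ y₂ : H, (u₁, y₁) ∈ A → (u₂, y₂) ∈ A →
    ⟪u₁ - u₂, y₁ - y₂⟫ ≥ μ * ‖u₁ - u₂‖ ^ 2

/-- `A` has incremental secant gain `γ` (is `1/γ`-output strictly incrementally
positive, i.e. `(1/γ)`-cocoercive). -/
def HasSecantGain (A : Set (H × H)) (γ : ℝ) : Prop :=
  ∀ u₁ y₁ u₂ y₂ : H, (u₁, y₁) ∈ A → (u₂, y₂) ∈ A →
    γ * ⟪u₁ - u₂, y₁ - y₂⟫ ≥ ‖y₁ - y₂‖ ^ 2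

/-- The sequence `λ_n`, with `λ₁ = 1/(1 + 1/(λ + 1))` and
`λ_n = 1/(1 + 1/(λ + λ_{n−1}))` for `n > 1` (the value at `0` is set to `1`,
which makes the `n = 1` case agree with the definition). -/
def lamSeq (lam : ℝ) : ℕ → ℝ
  | 0 => 1
  | n + 1 => 1 / (1 + 1 / (lam + lamSeq lam n))

lemma lamSeq_pos {lam : ℝ} (hlam : 0 ≤ lam) (k : ℕ) : 0 < lamSeq lam k := by
  induction k with
  | zero => simp [lamSeq]
  | succ k ih =>
    have : 0 < lam + lamSeq lam k := by linarith
    simp only [lamSeq]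
    positivity

lemma norm_add_sq_le_mul_add_div {E : Type*} [SeminormedAddCommGroup E] (a b : E)
    {γ δ : ℝ} (hγ : 0 < γ) (hδ : 0 < δ) :
    ‖a + b‖ ^ 2 ≤ (γ + δ) * (‖a‖ ^ 2 / γ + ‖b‖ ^ 2 / δ) := by
  calc ‖a + b‖ ^ 2 ≤ (‖a‖ + ‖b‖) ^ 2 := pow_le_pow_left₀ (norm_nonneg _) (norm_add_le a b) 2
    _ ≤ (γ + δ) * (‖a‖ ^ 2 / γ + ‖b‖ ^ 2 / δ) := by
      rw [div_add_div _ _ hγ.ne' hδ.ne', mul_div_assoc', le_div_iff₀ (by positivity)]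
      nlinarith [sq_nonneg (δ * ‖a‖ - γ * ‖b‖)]

lemma HasSecantGain.inputStrictlyPositive_relInv {A : Set (H × H)} {γ : ℝ} (hγ : 0 < γ)
    (h : HasSecantGain A γ) : InputStrictlyPositive (relInv A) (1 / γ) := by
  intro u₁ y₁ u₂ y₂ h₁ h₂
  have := h y₁ u₁ y₂ u₂ h₁ h₂
  rw [real_inner_comm] at this
  rw [ge_iff_le, div_mul_eq_mul_div, div_le_iff₀ hγ]
  linarith

lemma InputStrictlyPositive.hasSecantGain_relInv {A : Set (H × H)} {μ : ℝ} (hμ : 0 < μ)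
    (h : InputStrictlyPositive A μ) : HasSecantGain (relInv A) (1 / μ) := by
  intro u₁ y₁ u₂ y₂ h₁ h₂
  have := h y₁ u₁ y₂ u₂ h₁ h₂
  rw [real_inner_comm] at this
  rw [ge_iff_le, div_mul_eq_mul_div, le_div_iff₀ hμ]
  linarith

lemma InputStrictlyPositive.relAdd {A B : Set (H × H)} {μ ν : ℝ}
    (hA : InputStrictlyPositive A μ) (hB : InputStrictlyPositive B ν) :
    InputStrictlyPositive (relAdd A B) (μ + ν) := by
  rintro u₁ y₁ u₂ y₂ ⟨a₁, b₁, ha₁, hb₁, rfl⟩ ⟨a₂, b₂, ha₂, hb₂, rfl⟩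
  have hA' := hA u₁ a₁ u₂ a₂ ha₁ ha₂
  have hB' := hB u₁ b₁ u₂ b₂ hb₁ hb₂
  rw [add_sub_add_comm, inner_add_right]
  linarith

lemma HasSecantGain.relAdd {A B : Set (H × H)} {γ δ : ℝ} (hγ : 0 < γ) (hδ : 0 < δ)
    (hA : HasSecantGain A γ) (hB : HasSecantGain B δ) :
    HasSecantGain (relAdd A B) (γ + δ) := by
  rintro u₁ y₁ u₂ y₂ ⟨a₁, b₁, ha₁, hb₁, rfl⟩ ⟨a₂, b₂, ha₂, hb₂, rfl⟩
  have hA' : ‖a₁ - a₂‖ ^ 2 / γ ≤ ⟪u₁ - u₂, a₁ - a₂⟫ :=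
    (div_le_iff₀' hγ).2 (hA u₁ a₁ u₂ a₂ ha₁ ha₂)
  have hB' : ‖b₁ - b₂‖ ^ 2 / δ ≤ ⟪u₁ - u₂, b₁ - b₂⟫ :=
    (div_le_iff₀' hδ).2 (hB u₁ b₁ u₂ b₂ hb₁ hb₂)
  rw [add_sub_add_comm, inner_add_right, ge_iff_le]
  calc ‖(a₁ - a₂) + (b₁ - b₂)‖ ^ 2
      ≤ (γ + δ) * (‖a₁ - a₂‖ ^ 2 / γ + ‖b₁ - b₂‖ ^ 2 / δ) :=
        norm_add_sq_le_mul_add_div _ _ hγ hδ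
    _ ≤ (γ + δ) * (⟪u₁ - u₂, a₁ - a₂⟫ + ⟪u₁ - u₂, b₁ - b₂⟫) := by gcongr

lemma hasSecantGain_relInv_relAdd_relInv_relAdd {G R Z : Set (H × H)} {μ lam γ : ℝ}
    (hμ : 0 ≤ μ) (hlam : 0 < lam) (hγ : 0 < γ) (hG : InputStrictlyPositive G μ)
    (hR : HasSecantGain R lam) (hZ : HasSecantGain Z γ) :
    HasSecantGain (relInv (relAdd G (relInv (relAdd R Z)))) (1 / (μ + 1 / (lam + γ))) :=
  (hG.relAdd ((hR.relAdd hlam hγ hZ).inputStrictlyPositive_relInv (by positivity))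
    ).hasSecantGain_relInv (by positivity)

theorem chain_secant_gain_general (lam : ℝ) (hlam : 0 < lam) (n : ℕ)
    (G R Z : ℕ → Set (H × H))
    (hG : ∀ k, k ≤ n → InputStrictlyPositive (G k) 1)
    (hR : ∀ k, 1 ≤ k → k ≤ n → HasSecantGain (R k) lam)
    (hZ0 : Z 0 = relInv (G 0))
    (hZk : ∀ k, 1 ≤ k → k ≤ n →
      Z k = relInv (relAdd (G k) (relInv (relAdd (R k) (Z (k - 1)))))) :
    HasSecantGain (Z n) (lamSeq lam n) := by
  suffices ∀ k ≤ n, HasSecantGain (Z k) (lamSeq lam k) from this n le_rfl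
  intro k
  induction k with
  | zero =>
    intro _
    rw [hZ0]
    simpa [lamSeq] using (hG 0 (Nat.zero_le n)).hasSecantGain_relInv one_pos
  | succ k ih =>
    intro hkn
    rw [hZk (k + 1) k.succ_pos hkn]
    exact hasSecantGain_relInv_relAdd_relInv_relAdd zero_le_one hlam (lamSeq_pos hlam.le k)
      (hG (k + 1) hkn) (hR (k + 1) k.succ_pos hkn) (ih (by omega))

theorem chain_secant_gain (lam : ℝ) (hlam : 0 < lam) (n : ℕ) (hn : 1 ≤ n)
    (G R Z : ℕ → Set (H × H))
    (hG : ∀ k, k ≤ n → InputStrictlyPositive (G k) 1)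
    (hR : ∀ k, 1 ≤ k → k ≤ n → HasSecantGain (R k) lam)
    (hZ0 : Z 0 = relInv (G 0))
    (hZk : ∀ k, 1 ≤ k → k ≤ n →
      Z k = relInv (relAdd (G k) (relInv (relAdd (R k) (Z (k - 1)))))) :
    HasSecantGain (Z n) (lamSeq lam n) :=
  chain_secant_gain_general lam hlam n G R Z hG hR hZ0 hZk

end
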